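/- Suppose {q_n} is a sequence of positive reals such that the sequence Q_n := p_n (q_{n+1} - q_n + 1)/q_n is nonincreasing. Then liminf_{n→∞} (p_{n+1} - p_n) < ∞, i.e., the prime gaps g_n are bounded along a subsequence. -/

import Mathlib

/-!
If the gap `p (n + 1) - p n` were eventually at least `Q n`, clearing denominators would give
`q (n + 1) / p (n + 1) + 1 / p (n + 1) ≤ q n / p n`, so the partial sums of `∑ 1 / p n` would
telescope to a bound `q N / p N`, contradicting the divergence of the sum of prime reciprocals.
Hence `p (n + 1) - p n < Q n ≤ Q 0` for infinitely many `n`.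
-/

/-- `p n` is the `n`-th prime number (1-indexed), as a real number. -/
noncomputable def p (n : ℕ) : ℝ := Nat.nth Nat.Prime (n - 1)

open Filter

lemma p_pos (n : ℕ) : 0 < p n := by
  unfold p
  exact_mod_cast (Nat.prime_nth_prime (n - 1)).pos

lemma not_summable_one_div_nth_prime :
    ¬ Summable (fun n : ℕ => (1 : ℝ) / Nat.nth Nat.Prime n) := by
  have hinj := Nat.nth_injective Nat.infinite_setOfPred_prime
  have hrange := Nat.range_nth_of_infinite Nat.infinite_setOfPred_prime
  refine fun h => not_summable_one_div_on_primes <|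
    (hinj.summable_iff fun n hn => Set.indicator_of_notMem (hrange ▸ hn) _).mp ?_
  convert h using 2 with n
  simp

lemma not_summable_one_div_p : ¬ Summable (fun n : ℕ => 1 / p n) := by
  rw [← summable_nat_add_iff 1]
  simpa [p] using not_summable_one_div_nth_prime

lemma summable_of_eventually_add_le {b c : ℕ → ℝ} (hb : ∀ n, 0 ≤ b n) (hc : ∀ n, 0 ≤ c n)
    (h : ∀ᶠ n in atTop, c (n + 1) + b n ≤ c n) : Summable b := by
  obtain ⟨N, hN⟩ := eventually_atTop.mp h
  have telescope : ∀ m, ∑ k ∈ Finset.range m, b (k + N) + c (m + N) ≤ c N := by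
    intro m
    induction m with
    | zero => simp
    | succ m ih =>
      have := hN (m + N) (Nat.le_add_left N m)
      rw [Finset.sum_range_succ, Nat.succ_add]
      linarith
  refine (summable_nat_add_iff N).mp <|
    summable_of_sum_range_le (c := c N) (fun k => hb _) fun m => ?_
  linarith [telescope m, hc (m + N)]

lemma div_add_one_div_le_of_mul_le {a a' x x' : ℝ} (ha : 0 < a) (ha' : 0 < a') (hx : 0 < x)
    (h : a * ((x' - x + 1) / x) ≤ a' - a) : x' / a' + 1 / a' ≤ x / a := by
  rw [mul_div_assoc', div_le_iff₀ hx] at h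
  rw [← add_div, div_le_div_iff₀ ha' ha]
  linarith

theorem frequently_sub_lt_of_not_summable {a q : ℕ → ℝ} (ha : ∀ n, 0 < a n)
    (hq : ∀ n, 0 < q n) (hdiv : ¬ Summable (fun n => 1 / a n)) :
    ∃ᶠ n in atTop, a (n + 1) - a n < a n * ((q (n + 1) - q n + 1) / q n) := by
  refine fun h => hdiv <| (summable_nat_add_iff 1).mp ?_
  refine summable_of_eventually_add_le (c := fun n => q n / a n)
    (fun n => (one_div_pos.mpr (ha _)).le) (fun n => (div_pos (hq n) (ha n)).le) ?_
  filter_upwards [h] with n hn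
  exact div_add_one_div_le_of_mul_le (ha n) (ha (n + 1)) (hq n) (not_lt.mp hn)

open Filter in
theorem liminf_gap_lt_top_of_antitone (q : ℕ → ℝ) (hq : ∀ n, 0 < q n)
    (hQ : Antitone (fun n : ℕ => p n * ((q (n + 1) - q n + 1) / q n))) :
    Filter.atTop.liminf (fun n : ℕ => ((p (n + 1) - p n : ℝ) : EReal)) < ⊤ := by
  have hgap := frequently_sub_lt_of_not_summable p_pos hq not_summable_one_div_p
  calc Filter.atTop.liminf (fun n : ℕ => ((p (n + 1) - p n : ℝ) : EReal))
      ≤ ((p 0 * ((q 1 - q 0 + 1) / q 0) : ℝ) : EReal) :=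
        liminf_le_of_frequently_le' <| hgap.mono fun n hn =>
          EReal.coe_le_coe_iff.mpr (hn.le.trans (hQ n.zero_le))
    _ < ⊤ := EReal.coe_lt_top _
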